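/- Let n ≥ 1 and let T be a tree on n vertices. If T' is a tree obtained from T by a finite sequence of splittings, each splitting applied at a vertex of degree greater than 3, then the number of vertices of T' is at most 2n. -/

import Mathlib

open SimpleGraph

/-- The adjacency relation of the splitting of the tree `Gt` at the vertex `x`, whose
neighbours are enumerated by `e : Fin k → α`. -/
def splitAdj {α : Type} (Gt : SimpleGraph α) (x : α) (k : ℕ) (e : Fin k → α) :
    ({y : α // y ≠ x} ⊕ Fin k) → ({y : α // y ≠ x} ⊕ Fin k) → Prop
  | Sum.inl y, Sum.inl z => Gt.Adj y.1 z.1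
  | Sum.inl y, Sum.inr i => y.1 = e i
  | Sum.inr i, Sum.inl y => y.1 = e i
  | Sum.inr i, Sum.inr j => (i : ℕ) + 1 = (j : ℕ) ∨ (j : ℕ) + 1 = (i : ℕ)

/-- The graph obtained by splitting `Gt` at `x` (with neighbours enumerated by `e`). -/
def splitGraph {α : Type} (Gt : SimpleGraph α) (x : α) (k : ℕ) (e : Fin k → α) :
    SimpleGraph ({y : α // y ≠ x} ⊕ Fin k) where
  Adj := splitAdj Gt x k e
  symm := by
    constructor
    rintro (y | i) (z | j) h <;> simp only [splitAdj] at h ⊢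
    · exact Gt.adj_symm h
    · exact h
    · exact h
    · omega
  loopless := by
    constructor
    rintro (y | i) h <;> simp only [splitAdj] at h
    · exact Gt.irrefl h
    · omega

/-- `T'` is (isomorphic to) the graph obtained by splitting `T` at some vertex `x` of degree
`k ≥ 4`, for some enumeration `e` of the neighbours of `x`. -/
def IsSplitOf {α β : Type} (T : SimpleGraph α) (T' : SimpleGraph β) : Prop :=
  ∃ (x : α) (k : ℕ) (e : Fin k → α),
    4 ≤ k ∧ Function.Injective e ∧ (∀ i, T.Adj x (e i)) ∧
    (∀ y, T.Adj x y → ∃ i, e i = y) ∧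
    Nonempty (T' ≃g splitGraph T x k e)

/-- `SplitSeq T T'` : `T'` is obtained from `T` by a finite sequence of splittings, each
applied at a vertex of degree greater than `3`. -/
inductive SplitSeq : {α β : Type} → SimpleGraph α → SimpleGraph β → Prop
  | refl {α : Type} (T : SimpleGraph α) : SplitSeq T T
  | step {α β γ : Type} {T : SimpleGraph α} {T₁ : SimpleGraph β} {T₂ : SimpleGraph γ} :
      SplitSeq T T₁ → IsSplitOf T₁ T₂ → SplitSeq T T₂

/-!
Give a vertex of degree `d` the weight `d` if `d ≥ 4` and `1` otherwise. The total weight bounds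
the number of vertices, and a splitting never increases it: the split vertex of degree `k ≥ 4`
loses weight `k` while the `k` new vertices have degree at most `3`, and no other degree grows.
In a tree on `n ≥ 2` vertices every degree is positive, so the total weight is at most the degree
sum `2(n - 1)`.
-/

def degWeight (d : ℕ) : ℕ := if 4 ≤ d then d else 1

lemma degWeight_mono {a b : ℕ} (h : a ≤ b) : degWeight a ≤ degWeight b := by
  unfold degWeight; split_ifs <;> omega

lemma one_le_degWeight (d : ℕ) : 1 ≤ degWeight d := by
  unfold degWeight; split_ifs <;> omega

lemma degWeight_of_le_three {d : ℕ} (h : d ≤ 3) : degWeight d = 1 := if_neg (by omega)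

lemma degWeight_of_four_le {d : ℕ} (h : 4 ≤ d) : degWeight d = d := if_pos h

lemma degWeight_le_of_pos {d : ℕ} (h : 1 ≤ d) : degWeight d ≤ d := by
  unfold degWeight; split_ifs <;> omega

namespace SimpleGraph

noncomputable def splitPotential {V : Type} (G : SimpleGraph V) : ℕ :=
  ∑ᶠ v, degWeight (G.neighborSet v).ncard

lemma Iso.splitPotential_eq {V W : Type} {G : SimpleGraph V} {G' : SimpleGraph W} (φ : G ≃g G') :
    G'.splitPotential = G.splitPotential := by
  unfold splitPotential
  rw [← finsum_comp_equiv φ.toEquiv]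
  refine finsum_congr fun v => congrArg degWeight ?_
  rw [← Nat.card_coe_set_eq, ← Nat.card_coe_set_eq]
  exact (Nat.card_congr (φ.mapNeighborSet v)).symm

lemma card_le_splitPotential {V : Type} [Finite V] (G : SimpleGraph V) :
    Nat.card V ≤ G.splitPotential := by
  have := Fintype.ofFinite V
  rw [splitPotential, finsum_eq_sum_of_fintype, Nat.card_eq_fintype_card, ← Finset.card_univ,
    Finset.card_eq_sum_ones]
  exact Finset.sum_le_sum fun v _ => one_le_degWeight _

lemma IsTree.splitPotential_le {V : Type} [Fintype V] {T : SimpleGraph V} (hT : T.IsTree) :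
    T.splitPotential ≤ 2 * Fintype.card V := by
  classical
  rw [splitPotential, finsum_eq_sum_of_fintype]
  rcases le_or_gt (Fintype.card V) 1 with hone | hone
  · have hsub : Subsingleton V := Fintype.card_le_one_iff_subsingleton.mp hone
    have hdeg : ∀ v, (T.neighborSet v).ncard = 0 := fun v => (Set.ncard_eq_zero).mpr <|
      Set.eq_empty_of_forall_notMem fun w h => T.ne_of_adj h (Subsingleton.elim v w)
    simp only [hdeg, degWeight_of_le_three (Nat.zero_le 3), Finset.sum_const, Finset.card_univ,
      smul_eq_mul, mul_one]
    omega
  · have hdeg : ∀ v, (T.neighborSet v).ncard = T.degree v := fun v => by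
      rw [Set.ncard_eq_toFinset_card']; rfl
    have hpos : ∀ v, 1 ≤ T.degree v := fun v => by
      obtain ⟨w, hw⟩ := Fintype.exists_ne_of_one_lt_card hone v
      obtain ⟨p⟩ := hT.connected.preconnected v w
      exact (T.degree_pos_iff_exists_adj v).mpr ⟨_, p.adj_snd (p.not_nil_of_ne hw.symm)⟩
    simp only [hdeg]
    calc ∑ v, degWeight (T.degree v) ≤ ∑ v, T.degree v :=
          Finset.sum_le_sum fun v _ => degWeight_le_of_pos (hpos v)
      _ = 2 * (Fintype.card V - 1) := by
          rw [T.sum_degrees_eq_twice_card_edges, ← hT.card_edgeFinset, Nat.add_sub_cancel]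
      _ ≤ 2 * Fintype.card V := by omega

end SimpleGraph

section Split

variable {α : Type} (T : SimpleGraph α) {x : α} {k : ℕ} {e : Fin k → α}

lemma le_ncard_neighborSet_of_injective [Finite α] (he : Function.Injective e)
    (hadj : ∀ i, T.Adj x (e i)) : k ≤ (T.neighborSet x).ncard :=
  calc k = (Set.range e).ncard := by rw [Set.ncard_range_of_injective he, Nat.card_fin]
    _ ≤ (T.neighborSet x).ncard := Set.ncard_le_ncard (Set.range_subset_iff.mpr hadj)

lemma ncard_neighborSet_splitGraph_inl_le [Finite α] (he : Function.Injective e)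
    (hadj : ∀ i, T.Adj x (e i)) (y : {y : α // y ≠ x}) :
    ((splitGraph T x k e).neighborSet (.inl y)).ncard ≤ (T.neighborSet y).ncard := by
  -- contract the new path `x₁ ⋯ x_k` back to `x`
  refine Set.ncard_le_ncard_of_injOn (Sum.elim Subtype.val fun _ => x) ?_ ?_
  · rintro (z | i) h
    · exact h
    · change y.1 = e i at h
      exact h ▸ (hadj i).symm
  · rintro (z | i) hz (z' | i') hz' h
    · exact congrArg Sum.inl (Subtype.ext h)
    · exact (z.2 h).elim
    · exact (z'.2 h.symm).elim
    · change y.1 = e i at hz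
      change y.1 = e i' at hz'
      exact congrArg Sum.inr (he (hz.symm.trans hz'))

lemma ncard_neighborSet_splitGraph_inr_le (i : Fin k) :
    ((splitGraph T x k e).neighborSet (.inr i)).ncard ≤ 3 := by
  let t : Finset (Option ℕ) := {none, some ((i : ℕ) - 1), some ((i : ℕ) + 1)}
  calc _ ≤ (t : Set (Option ℕ)).ncard := by
        refine Set.ncard_le_ncard_of_injOn (Sum.elim (fun _ => none) fun j => some j.val) ?_ ?_
        · rintro (z | j) h
          · simp [t]
          · change (i : ℕ) + 1 = j ∨ (j : ℕ) + 1 = i at h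
            simp only [t, Finset.coe_insert, Finset.coe_singleton, Sum.elim_inr, Set.mem_insert_iff,
              Set.mem_singleton_iff, Option.some.injEq, reduceCtorEq, false_or]
            omega
        · rintro (z | j) hz (z' | j') hz' h
          · change z.1 = e i at hz
            change z'.1 = e i at hz'
            exact congrArg Sum.inl (Subtype.ext (hz.trans hz'.symm))
          · simp at h
          · simp at h
          · simp only [Sum.elim_inr, Option.some.injEq] at h
            exact congrArg Sum.inr (Fin.ext h)
    _ ≤ 3 := by rw [Set.ncard_coe_finset]; exact Finset.card_le_three

lemma splitPotential_splitGraph_le [Finite α] (hk : 4 ≤ k) (he : Function.Injective e)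
    (hadj : ∀ i, T.Adj x (e i)) : (splitGraph T x k e).splitPotential ≤ T.splitPotential := by
  classical
  have := Fintype.ofFinite α
  rw [splitPotential, splitPotential, finsum_eq_sum_of_fintype, finsum_eq_sum_of_fintype,
    Fintype.sum_sum_type, Fintype.sum_eq_add_sum_subtype_ne _ x]
  have hinl : ∑ y : {y // y ≠ x}, degWeight ((splitGraph T x k e).neighborSet (.inl y)).ncard ≤
      ∑ y : {y // y ≠ x}, degWeight (T.neighborSet y).ncard :=
    Finset.sum_le_sum fun y _ => degWeight_mono (ncard_neighborSet_splitGraph_inl_le T he hadj y)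
  have hinr : ∑ i : Fin k, degWeight ((splitGraph T x k e).neighborSet (.inr i)).ncard = k := by
    simp [degWeight_of_le_three (ncard_neighborSet_splitGraph_inr_le T _)]
  have hx := le_ncard_neighborSet_of_injective T he hadj
  rw [← degWeight_of_four_le (hk.trans hx)] at hx
  omega

end Split

lemma SplitSeq.finite_and_splitPotential_le {α β : Type} {T : SimpleGraph α} {T' : SimpleGraph β}
    (h : SplitSeq T T') [Finite α] : Finite β ∧ T'.splitPotential ≤ T.splitPotential := by
  induction h with
  | refl T => exact ⟨inferInstance, le_rfl⟩
  | step _ hsplit ih =>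
    obtain ⟨hfin, hle⟩ := ih
    obtain ⟨x, k, e, hk, he, hadj, -, ⟨φ⟩⟩ := hsplit
    exact ⟨Finite.of_equiv _ φ.toEquiv.symm, (φ.splitPotential_eq.symm.trans_le
      (splitPotential_splitGraph_le _ hk he hadj)).trans hle⟩

theorem splitSeq_card_le_general {α β : Type} [Fintype α] (n : ℕ)
    (hcard : Fintype.card α = n)
    (T : SimpleGraph α) (hT : T.IsTree)
    (T' : SimpleGraph β) (hseq : SplitSeq T T') :
    Nat.card β ≤ 2 * n := by
  obtain ⟨_, hle⟩ := hseq.finite_and_splitPotential_le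
  calc Nat.card β ≤ T'.splitPotential := T'.card_le_splitPotential
    _ ≤ T.splitPotential := hle
    _ ≤ 2 * n := hcard ▸ hT.splitPotential_le

/-- If `T` is a tree on `n ≥ 1` vertices and `T'` is obtained from `T` by a finite sequence
of splittings at vertices of degree greater than `3`, then `T'` has at most `2n` vertices. -/
theorem splitSeq_card_le {α β : Type} [Fintype α] (n : ℕ) (hn : 1 ≤ n)
    (hcard : Fintype.card α = n)
    (T : SimpleGraph α) (hT : T.IsTree)
    (T' : SimpleGraph β) (hseq : SplitSeq T T') :
    Nat.card β ≤ 2 * n :=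
  splitSeq_card_le_general n hcard T hT T' hseq
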